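/- Let U ⊆ O_K^{*,+} be an admissible subgroup and let Γ = U ⋉ O_K act on ℍ^s × ℂ^t by (u,a)·(z₁,…,z_{s+t}) = (σ₁(u)z₁+σ₁(a),…,σ_{s+t}(u)z_{s+t}+σ_{s+t}(a)). Then the quotient topological space (ℍ^s × ℂ^t)/Γ (the orbit space with the quotient topology) is compact. -/

import Mathlib

/-!
Setting: `K` is a number field with exactly `s ≥ 1` real embeddings
`σr 0, …, σr (s-1) : K →+* ℝ` and `2t ≥ 2` complex (non-real) embeddings, of which
`σc 0, …, σc (t-1) : K →+* ℂ` are pairwise non-conjugate representatives.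
-/

noncomputable section
open NumberField

/-- The subgroup `O_K^{*,+}` of totally positive units: units `u` of the ring of integers
with `σᵢ(u) > 0` for every real embedding `σᵢ`, `i = 1, …, s`. -/
def posUnits (K : Type) [Field K] [NumberField K] {s : ℕ}
    (σr : Fin s → (K →+* ℝ)) : Subgroup (𝓞 K)ˣ where
  carrier := {u | ∀ i, 0 < σr i ((u : 𝓞 K) : K)}
  mul_mem' := by
    intro a b ha hb i
    push_cast [map_mul]
    exact mul_pos (ha i) (hb i)
  one_mem' := by intro i; simp
  inv_mem' := by
    intro a ha i
    have h1 : σr i ((↑(a⁻¹ * a) : 𝓞 K) : K) = 1 := by simp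
    have h2 : σr i ((↑(a⁻¹) : 𝓞 K) : K) * σr i ((↑a : 𝓞 K) : K) = 1 := by
      rw [← h1]; push_cast [map_mul]; ring
    nlinarith [ha i, h2]

/-- A subset of `ℝⁿ` is a lattice if it is discrete and its `ℝ`-linear span is all of `ℝⁿ`. -/
def IsLatticeSet {n : ℕ} (S : Set (Fin n → ℝ)) : Prop :=
  DiscreteTopology S ∧ Submodule.span ℝ S = ⊤

/-- The projection of the logarithmic embedding `l` to the first `s` coordinates:
`u ↦ (log |σ₁(u)|, …, log |σ_s(u)|)`. -/
def projLog {K : Type} [Field K] [NumberField K] {s : ℕ}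
    (σr : Fin s → (K →+* ℝ)) (u : (𝓞 K)ˣ) : Fin s → ℝ :=
  fun i => Real.log |σr i ((u : 𝓞 K) : K)|

/-- The logarithmic embedding
`l(u) = (log|σ₁(u)|, …, log|σ_s(u)|, 2 log|σ_{s+1}(u)|, …, 2 log|σ_{s+t}(u)|)`. -/
def logEmb {K : Type} [Field K] [NumberField K] {s t : ℕ}
    (σr : Fin s → (K →+* ℝ)) (σc : Fin t → (K →+* ℂ)) (u : (𝓞 K)ˣ) :
    Fin (s + t) → ℝ :=
  Fin.append (fun i => Real.log |σr i ((u : 𝓞 K) : K)|)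
    (fun j => 2 * Real.log ‖σc j ((u : 𝓞 K) : K)‖)

/-- A subgroup `U ⊆ O_K^{*,+}` is admissible if it is free abelian of rank `s` and the
projection of `l(U)` to the first `s` coordinates is a lattice in `ℝˢ`. -/
def Admissible {K : Type} [Field K] [NumberField K] {s : ℕ}
    (σr : Fin s → (K →+* ℝ)) (U : Subgroup (𝓞 K)ˣ) : Prop :=
  U ≤ posUnits K σr ∧ Nonempty (U ≃* Multiplicative (Fin s → ℤ)) ∧
    IsLatticeSet (projLog σr '' (U : Set (𝓞 K)ˣ))

/-- The affine action of a pair `(u, a) ∈ O_K^{*,+} ⋉ O_K` on `ℂˢ × ℂᵗ`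
(restricting to `ℍˢ × ℂᵗ`): `(u,a)·z = (σᵢ(u) zᵢ + σᵢ(a))ᵢ`. -/
def otAct {K : Type} [Field K] [NumberField K] {s t : ℕ}
    (σr : Fin s → (K →+* ℝ)) (σc : Fin t → (K →+* ℂ))
    (g : (𝓞 K)ˣ × 𝓞 K) (z : (Fin s → ℂ) × (Fin t → ℂ)) :
    (Fin s → ℂ) × (Fin t → ℂ) :=
  (fun i => (σr i ((g.1 : 𝓞 K) : K) : ℂ) * z.1 i + (σr i (g.2 : K) : ℂ),
   fun j => σc j ((g.1 : 𝓞 K) : K) * z.2 j + σc j (g.2 : K))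

/-- The hyperplane `L = {x ∈ ℝᵐ : ∑ xᵢ = 0}` as a submodule of `ℝᵐ`. -/
def sumZero (m : ℕ) : Submodule ℝ (Fin m → ℝ) where
  carrier := {x | ∑ i, x i = 0}
  add_mem' := by intro a b ha hb; simp_all [Finset.sum_add_distrib]
  zero_mem' := by simp
  smul_mem' := by intro c x hx; simp_all [← Finset.mul_sum]
/-!
Write a point of `ℍˢ × ℂᵗ` as `(log Im z, (Re z, z'))`. A unit `u` shifts the first component by
its logarithmic vector `projLog u`, and `a ∈ O_K` shifts the second by its embedding
`(σᵢ(a))ᵢ`. By admissibility the vectors `projLog u`, `u ∈ U`, form an additive subgroup spanning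
`ℝˢ`, and `O_K` embeds cocompactly in `ℝˢ × ℂᵗ` since the mixed space of `K` projects onto it. So
each coordinate can be moved into a fixed compact set, every orbit meets the image of a product of
two compact sets, and the quotient is a continuous image of that compact set.
-/

open NumberField NumberField.InfinitePlace Set

/-- `E = C + L` for a compact `C`; for a subgroup `L` this says that `E ⧸ L` is compact. -/
def IsCocompact {E : Type*} [TopologicalSpace E] [AddGroup E] (L : Set E) : Prop :=
  ∃ C : Set E, IsCompact C ∧ ∀ v, ∃ l ∈ L, v - l ∈ C

namespace IsCocompact

variable {E F : Type*} [TopologicalSpace E] [AddGroup E] [TopologicalSpace F] [AddGroup F]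

theorem mono {L L' : Set E} (h : IsCocompact L) (hL : L ⊆ L') : IsCocompact L' := by
  obtain ⟨C, hC, hLC⟩ := h
  refine ⟨C, hC, fun v => ?_⟩
  obtain ⟨l, hl, hvl⟩ := hLC v
  exact ⟨l, hL hl, hvl⟩

theorem image {L : Set E} (h : IsCocompact L) (f : E →+ F) (hf : Continuous f)
    (hf_surj : Function.Surjective f) : IsCocompact (f '' L) := by
  obtain ⟨C, hC, hLC⟩ := h
  refine ⟨f '' C, hC.image hf, fun w => ?_⟩
  obtain ⟨v, rfl⟩ := hf_surj w
  obtain ⟨l, hl, hvl⟩ := hLC v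
  exact ⟨f l, mem_image_of_mem f hl, map_sub f v l ▸ mem_image_of_mem f hvl⟩

end IsCocompact

section Lattice

variable {E : Type*} [NormedAddCommGroup E] [NormedSpace ℝ E]

theorem ZSpan.isCocompact {ι : Type*} [Fintype ι] (b : Module.Basis ι ℝ E) :
    IsCocompact (Submodule.span ℤ (range b) : Set E) :=
  ⟨b.parallelepiped, b.parallelepiped.isCompact, fun v =>
    ⟨ZSpan.floor b v, (ZSpan.floor b v).2,
      ZSpan.fundamentalDomain_subset_parallelepiped b (ZSpan.fract_mem_fundamentalDomain b v)⟩⟩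

theorem AddSubgroup.isCocompact_of_span_eq_top [FiniteDimensional ℝ E] (L : AddSubgroup E)
    (hL : Submodule.span ℝ (L : Set E) = ⊤) : IsCocompact (L : Set E) := by
  let b := Module.Basis.ofSpan hL.ge
  have : Fintype _ := @Fintype.ofFinite _ (Module.Finite.finite_basis b)
  exact (ZSpan.isCocompact b).mono
    (Submodule.span_le (p := L.toIntSubmodule).mpr (Module.Basis.ofSpan_subset hL.ge))

end Lattice

section Units

variable {K : Type} [Field K] [NumberField K] {s : ℕ} (σr : Fin s → (K →+* ℝ))

theorem projLog_one : projLog σr 1 = 0 := by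
  funext i; simp [projLog]

theorem projLog_mul (u v : (𝓞 K)ˣ) : projLog σr (u * v) = projLog σr u + projLog σr v := by
  funext i
  simp [projLog, abs_mul, Real.log_mul]

theorem projLog_inv (u : (𝓞 K)ˣ) : projLog σr u⁻¹ = -projLog σr u :=
  eq_neg_of_add_eq_zero_left (by rw [← projLog_mul, inv_mul_cancel, projLog_one])

def unitLogLattice (U : Subgroup (𝓞 K)ˣ) : AddSubgroup (Fin s → ℝ) where
  carrier := projLog σr '' U
  add_mem' := by
    rintro _ _ ⟨u, hu, rfl⟩ ⟨v, hv, rfl⟩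
    exact ⟨u * v, U.mul_mem hu hv, projLog_mul σr u v⟩
  zero_mem' := ⟨1, U.one_mem, projLog_one σr⟩
  neg_mem' := by
    rintro _ ⟨u, hu, rfl⟩
    exact ⟨u⁻¹, U.inv_mem hu, projLog_inv σr u⟩

end Units

section MixedSpace

open Complex ComplexEmbedding mixedEmbedding

variable {K : Type} [Field K]

theorem isReal_ofRealHom_comp (φ : K →+* ℝ) : ComplexEmbedding.IsReal (ofRealHom.comp φ) :=
  isReal_iff.mpr (RingHom.ext fun x => conj_ofReal (φ x))

def realPlace (φ : K →+* ℝ) : {w : InfinitePlace K // IsReal w} :=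
  mkReal ⟨ofRealHom.comp φ, isReal_ofRealHom_comp φ⟩

theorem embedding_of_isReal_realPlace (φ : K →+* ℝ) (x : K) :
    embedding_of_isReal (realPlace φ).2 x = φ x :=
  ofReal_injective (by simp [realPlace, isReal_ofRealHom_comp φ])

theorem realPlace_injective : Function.Injective (realPlace (K := K)) := by
  intro φ ψ h
  ext x
  simpa only [embedding_of_isReal_realPlace] using
    congrArg (fun w : {w : InfinitePlace K // IsReal w} => embedding_of_isReal w.2 x) h

def complexPlace (φ : K →+* ℂ) (hφ : ¬ ComplexEmbedding.IsReal φ) :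
    {w : InfinitePlace K // IsComplex w} :=
  mkComplex ⟨φ, hφ⟩

theorem complexPlace_injective {t : ℕ} {σc : Fin t → (K →+* ℂ)} (hσc : Function.Injective σc)
    (hσc_nonreal : ∀ j, ¬ ComplexEmbedding.IsReal (σc j))
    (hσc_nonconj : ∀ j k, conjugate (σc j) ≠ σc k) :
    Function.Injective fun j => complexPlace (σc j) (hσc_nonreal j) := by
  intro j k h
  rcases mk_eq_iff.mp (congrArg Subtype.val h) with h | h
  · exact hσc h
  · exact absurd h (hσc_nonconj j k)

open Classical in
/-- The chosen embedding of the place `mk φ` is `φ` or `conjugate φ`; `orient φ` undoes the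
conjugation in the second case. -/
def orient (φ : K →+* ℂ) : ℂ ≃L[ℝ] ℂ :=
  if embedding (mk φ) = φ then ContinuousLinearEquiv.refl ℝ ℂ else conjCLE

theorem orient_embedding_mk (φ : K →+* ℂ) (x : K) : orient φ (embedding (mk φ) x) = φ x := by
  unfold orient
  split_ifs with h
  · simp [h]
  · rw [(embedding_mk_eq φ).resolve_left h]
    simp

variable {s t : ℕ} (σr : Fin s → (K →+* ℝ)) (σc : Fin t → (K →+* ℂ))

def coordEmb : K →+* (Fin s → ℝ) × (Fin t → ℂ) :=
  (RingHom.pi σr).prod (RingHom.pi σc)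

def mixedSpaceToCoords (hσc_nonreal : ∀ j, ¬ ComplexEmbedding.IsReal (σc j)) :
    mixedSpace K →+ (Fin s → ℝ) × (Fin t → ℂ) :=
  AddMonoidHom.mk' (fun x => (fun i => x.1 (realPlace (σr i)),
      fun j => orient (σc j) (x.2 (complexPlace (σc j) (hσc_nonreal j)))))
    (fun x y => by ext <;> simp)

variable {σc} (hσc_nonreal : ∀ j, ¬ ComplexEmbedding.IsReal (σc j))

theorem continuous_mixedSpaceToCoords : Continuous (mixedSpaceToCoords σr σc hσc_nonreal) := by
  show Continuous fun x : mixedSpace K => ((fun i => x.1 (realPlace (σr i)),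
      fun j => orient (σc j) (x.2 (complexPlace (σc j) (hσc_nonreal j)))) :
        (Fin s → ℝ) × (Fin t → ℂ))
  fun_prop

theorem mixedSpaceToCoords_mixedEmbedding (x : K) :
    mixedSpaceToCoords σr σc hσc_nonreal (mixedEmbedding K x) = coordEmb σr σc x := by
  ext i
  · exact embedding_of_isReal_realPlace (σr i) x
  · exact orient_embedding_mk (σc i) x

variable {σr}

theorem mixedSpaceToCoords_surjective (hσr : Function.Injective σr) (hσc : Function.Injective σc)
    (hσc_nonconj : ∀ j k, conjugate (σc j) ≠ σc k) :
    Function.Surjective (mixedSpaceToCoords σr σc hσc_nonreal) := by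
  intro y
  refine ⟨(Function.extend (fun i => realPlace (σr i)) y.1 0,
    Function.extend (fun j => complexPlace (σc j) (hσc_nonreal j))
      (fun j => (orient (σc j)).symm (y.2 j)) 0), ?_⟩
  ext i
  · exact (realPlace_injective.comp hσr).extend_apply _ _ i
  · simp only [mixedSpaceToCoords, AddMonoidHom.mk'_apply]
    rw [(complexPlace_injective hσc hσc_nonreal hσc_nonconj).extend_apply]
    simp

end MixedSpace

open scoped Classical in
open ComplexEmbedding mixedEmbedding in
theorem isCocompact_range_coordEmb {K : Type} [Field K] [NumberField K] {s t : ℕ}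
    {σr : Fin s → (K →+* ℝ)} {σc : Fin t → (K →+* ℂ)} (hσr : Function.Injective σr)
    (hσc : Function.Injective σc) (hσc_nonreal : ∀ j, ¬ ComplexEmbedding.IsReal (σc j))
    (hσc_nonconj : ∀ j k, conjugate (σc j) ≠ σc k) :
    IsCocompact (range fun a : 𝓞 K => coordEmb σr σc a) := by
  convert (ZSpan.isCocompact (latticeBasis K)).image (mixedSpaceToCoords σr σc hσc_nonreal)
    (continuous_mixedSpaceToCoords σr hσc_nonreal)
    (mixedSpaceToCoords_surjective hσc_nonreal hσr hσc hσc_nonconj) using 1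
  rw [span_latticeBasis]
  ext y
  simp [mixedSpaceToCoords_mixedEmbedding]

theorem compactSpace_quot_of_exists_rel {X : Type*} [TopologicalSpace X] {r : X → X → Prop}
    {C : Set X} (hC : IsCompact C) (h : ∀ x, ∃ y ∈ C, r x y) : CompactSpace (Quot r) := by
  refine ⟨?_⟩
  have hsurj : Quot.mk r '' C = univ := by
    refine eq_univ_of_forall (Quot.ind fun x => ?_)
    obtain ⟨y, hy, hxy⟩ := h x
    exact ⟨y, hy, (Quot.sound hxy).symm⟩
  exact hsurj ▸ hC.image continuous_quot_mk

section OTAction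

open Complex

variable {s t : ℕ}

abbrev OTDomain (s t : ℕ) : Type := {w : (Fin s → ℂ) × (Fin t → ℂ) // ∀ i, 0 < (w.1 i).im}

def logIm (z : (Fin s → ℂ) × (Fin t → ℂ)) : Fin s → ℝ := fun i => Real.log (z.1 i).im

def reProj (z : (Fin s → ℂ) × (Fin t → ℂ)) : (Fin s → ℝ) × (Fin t → ℂ) :=
  (fun i => (z.1 i).re, z.2)

def ofLogImReProj (p : (Fin s → ℝ) × (Fin s → ℝ) × (Fin t → ℂ)) : OTDomain s t :=
  ⟨(fun i => p.2.1 i + Real.exp (p.1 i) * I, p.2.2), fun i => by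
    simpa only [add_im, ofReal_im, mul_I_im, ofReal_re, zero_add] using Real.exp_pos (p.1 i)⟩

theorem continuous_ofLogImReProj : Continuous (ofLogImReProj (s := s) (t := t)) :=
  Continuous.subtype_mk (by fun_prop) _

theorem ofLogImReProj_logIm_reProj (z : OTDomain s t) :
    ofLogImReProj (logIm z.1, reProj z.1) = z := by
  ext i
  · simp only [ofLogImReProj, logIm, reProj, Real.exp_log (z.2 i), re_add_im]
  · rfl

variable {K : Type} [Field K] [NumberField K] (σr : Fin s → (K →+* ℝ)) (σc : Fin t → (K →+* ℂ))

theorem otAct_im (g : (𝓞 K)ˣ × 𝓞 K) (z : (Fin s → ℂ) × (Fin t → ℂ)) (i : Fin s) :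
    ((otAct σr σc g z).1 i).im = σr i ((g.1 : 𝓞 K) : K) * (z.1 i).im := by
  simp [otAct]

theorem otAct_im_pos {u : (𝓞 K)ˣ} (hu : u ∈ posUnits K σr) (a : 𝓞 K)
    {z : (Fin s → ℂ) × (Fin t → ℂ)} (hz : ∀ i, 0 < (z.1 i).im) (i : Fin s) :
    0 < ((otAct σr σc (u, a) z).1 i).im := by
  rw [otAct_im]
  exact mul_pos (hu i) (hz i)

theorem logIm_otAct (u : (𝓞 K)ˣ) (a : 𝓞 K) {z : (Fin s → ℂ) × (Fin t → ℂ)}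
    (hz : ∀ i, (z.1 i).im ≠ 0) : logIm (otAct σr σc (u, a) z) = projLog σr u + logIm z := by
  funext i
  have hu : σr i ((u : 𝓞 K) : K) ≠ 0 := by simp
  simp only [logIm, otAct_im, projLog, Pi.add_apply, Real.log_abs, Real.log_mul hu (hz i)]

theorem reProj_otAct (u : (𝓞 K)ˣ) (a : 𝓞 K) (z : (Fin s → ℂ) × (Fin t → ℂ)) :
    reProj (otAct σr σc (u, a) z) = reProj (otAct σr σc (u, 0) z) + coordEmb σr σc a := by
  ext i <;> simp [reProj, otAct, coordEmb, RingHom.pi_apply]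

variable {σr σc}

theorem exists_otAct_logIm_mem_reProj_mem {U : Subgroup (𝓞 K)ˣ} {C₁ : Set (Fin s → ℝ)}
    {C₂ : Set ((Fin s → ℝ) × (Fin t → ℂ))} (h₁ : ∀ v, ∃ l ∈ projLog σr '' U, v - l ∈ C₁)
    (h₂ : ∀ v, ∃ l ∈ range fun a : 𝓞 K => coordEmb σr σc a, v - l ∈ C₂)
    {z : (Fin s → ℂ) × (Fin t → ℂ)} (hz : ∀ i, (z.1 i).im ≠ 0) :
    ∃ u ∈ U, ∃ a : 𝓞 K, logIm (otAct σr σc (u, a) z) ∈ C₁ ∧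
      reProj (otAct σr σc (u, a) z) ∈ C₂ := by
  obtain ⟨_, ⟨u, hu, rfl⟩, hu₁⟩ := h₁ (logIm z)
  obtain ⟨_, ⟨a, rfl⟩, ha₂⟩ := h₂ (reProj (otAct σr σc (u⁻¹, 0) z))
  refine ⟨u⁻¹, U.inv_mem hu, -a, ?_, ?_⟩
  · rwa [logIm_otAct σr σc _ _ hz, projLog_inv, neg_add_eq_sub]
  · rw [reProj_otAct]
    push_cast
    rwa [map_neg, ← sub_eq_add_neg]

end OTAction

theorem otQuotient_compactSpace_general
    (K : Type) [Field K] [NumberField K] (s t : ℕ)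
    (σr : Fin s → (K →+* ℝ)) (hσr : Function.Bijective σr)
    (σc : Fin t → (K →+* ℂ)) (hσc : Function.Injective σc)
    (hσc_nonreal : ∀ j, ¬ ComplexEmbedding.IsReal (σc j))
    (hσc_nonconj : ∀ j k, ComplexEmbedding.conjugate (σc j) ≠ σc k)
    (U : Subgroup (𝓞 K)ˣ) (hU : Admissible σr U) :
    CompactSpace (Quot fun x y : {w : (Fin s → ℂ) × (Fin t → ℂ) // ∀ i, 0 < (w.1 i).im} =>
      ∃ u ∈ U, ∃ a : 𝓞 K, otAct σr σc (u, a) x.val = y.val) := by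
  obtain ⟨hU_pos, -, -, hU_span⟩ := hU
  obtain ⟨C₁, hC₁, h₁⟩ := (unitLogLattice σr U).isCocompact_of_span_eq_top hU_span
  obtain ⟨C₂, hC₂, h₂⟩ := isCocompact_range_coordEmb hσr.injective hσc hσc_nonreal hσc_nonconj
  refine compactSpace_quot_of_exists_rel ((hC₁.prod hC₂).image continuous_ofLogImReProj)
    fun z => ?_
  obtain ⟨u, hu, a, hu₁, ha₂⟩ := exists_otAct_logIm_mem_reProj_mem h₁ h₂ fun i => (z.2 i).ne'
  let p : OTDomain s t := ⟨otAct σr σc (u, a) z.1, otAct_im_pos σr σc (hU_pos hu) a z.2⟩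
  exact ⟨p, ⟨_, ⟨hu₁, ha₂⟩, ofLogImReProj_logIm_reProj p⟩, u, hu, a, rfl⟩

/-- Let `U ⊆ O_K^{*,+}` be admissible and let `Γ = U ⋉ O_K` act on
`ℍˢ × ℂᵗ`. Then the quotient topological space `(ℍˢ × ℂᵗ)/Γ` (the orbit space with the
quotient topology) is compact. -/
theorem otQuotient_compactSpace
    (K : Type) [Field K] [NumberField K] (s t : ℕ) (hs : 1 ≤ s) (ht : 1 ≤ t)
    (σr : Fin s → (K →+* ℝ)) (hσr : Function.Bijective σr)
    (σc : Fin t → (K →+* ℂ)) (hσc : Function.Injective σc)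
    (hσc_nonreal : ∀ j, ¬ ComplexEmbedding.IsReal (σc j))
    (hσc_nonconj : ∀ j k, ComplexEmbedding.conjugate (σc j) ≠ σc k)
    (hσc_exh : ∀ φ : K →+* ℂ, ¬ ComplexEmbedding.IsReal φ →
      ∃ j, σc j = φ ∨ ComplexEmbedding.conjugate (σc j) = φ)
    (U : Subgroup (𝓞 K)ˣ) (hU : Admissible σr U) :
    CompactSpace (Quot fun x y : {w : (Fin s → ℂ) × (Fin t → ℂ) // ∀ i, 0 < (w.1 i).im} =>
      ∃ u ∈ U, ∃ a : 𝓞 K, otAct σr σc (u, a) x.val = y.val) :=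
  otQuotient_compactSpace_general K s t σr hσr σc hσc hσc_nonreal hσc_nonconj U hU

end
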